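/- (Addition theorem for relativistic Hermite polynomials) For every integer n ≥ 0 and all complex numbers N, X, Y: Ĥ_n^N(X+Y) = Σ_{k=0}^n binom(n,k) · (1-2N-n)_{n-k} · (-X)^{n-k} · Ĥ_k^N(Y). -/
import Mathlib


open Finset Polynomial

lemma poch_split (a b : ℕ) (x : ℂ) :
    (ascPochhammer ℂ (a + b)).eval x =
      (ascPochhammer ℂ a).eval x * (ascPochhammer ℂ b).eval (x + a) := by
  rw [← ascPochhammer_mul, eval_mul, eval_comp, eval_add, eval_X, eval_natCast]

lemma poch_reflect (j : ℕ) : ∀ x : ℂ,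
    (ascPochhammer ℂ j).eval (1 - x - j) = (-1) ^ j * (ascPochhammer ℂ j).eval x := by
  induction j with
  | zero => simp
  | succ j ih =>
    intro x
    have h1 : eval x (ascPochhammer ℂ (j+1)) = x * eval (x+1) (ascPochhammer ℂ j) := by
      rw [ascPochhammer_succ_left, eval_mul, eval_X, eval_comp, eval_add, eval_X, eval_one]
    rw [ascPochhammer_succ_eval, show (1 - x - (↑(j+1):ℂ)) = 1 - (x+1) - j by push_cast; ring,
      ih (x+1), h1]
    ring

lemma poch_dup (t : ℕ) (a : ℂ) :
    (2:ℂ) ^ t * (ascPochhammer ℂ ((t + 1) / 2)).eval a *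
      (ascPochhammer ℂ (t / 2)).eval (a + 1/2) = (ascPochhammer ℂ t).eval (2 * a) := by
  induction t with
  | zero => simp
  | succ t ih =>
    rcases Nat.even_or_odd t with ⟨u, hu⟩ | ⟨u, hu⟩ <;> subst hu
    · rw [show (u + u + 1 + 1) / 2 = u + 1 by omega, show (u + u + 1) / 2 = u by omega]
      rw [show (u + u + 1) / 2 = u by omega, show (u + u) / 2 = u by omega] at ih
      rw [ascPochhammer_succ_eval u a, ascPochhammer_succ_eval (u+u) (2*a)]
      push_cast
      linear_combination (2 * a + 2 * (u:ℂ)) * ih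
    · rw [show (2 * u + 1 + 1 + 1) / 2 = u + 1 by omega,
        show (2 * u + 1 + 1) / 2 = u + 1 by omega]
      rw [show (2 * u + 1 + 1) / 2 = u + 1 by omega, show (2 * u + 1) / 2 = u by omega] at ih
      rw [ascPochhammer_succ_eval u (a + 1/2), ascPochhammer_succ_eval (2*u+1) (2*a)]
      push_cast
      linear_combination (2 * a + 2 * (u:ℂ) + 1) * ih

lemma poch_keyA (n m : ℕ) (N : ℂ) (h : 2 * m ≤ n) :
    (2:ℂ) ^ (n - 2 * m) * (ascPochhammer ℂ ((n + 1) / 2)).eval N *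
      (ascPochhammer ℂ (n / 2 - m)).eval (N + 1/2 + m) =
    (ascPochhammer ℂ m).eval N * (ascPochhammer ℂ (n - 2 * m)).eval (2 * (N + m)) := by
  rw [show (n + 1) / 2 = m + (n - 2 * m + 1) / 2 by omega, poch_split,
    show n / 2 - m = (n - 2 * m) / 2 by omega,
    show N + 1/2 + (m:ℂ) = (N + m) + 1/2 by ring]
  have hd := poch_dup (n - 2 * m) (N + m)
  linear_combination (ascPochhammer ℂ m).eval N * hd

lemma poch_key (n k m : ℕ) (N : ℂ) (hm : 2 * m ≤ k) (hk : k ≤ n) :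
    (2:ℂ) ^ (n - k) * (ascPochhammer ℂ ((n + 1) / 2)).eval N *
      (ascPochhammer ℂ (n / 2 - m)).eval (N + 1/2 + m) =
    (ascPochhammer ℂ (n - k)).eval (2 * N + k) *
      ((ascPochhammer ℂ ((k + 1) / 2)).eval N *
        (ascPochhammer ℂ (k / 2 - m)).eval (N + 1/2 + m)) := by
  apply mul_left_cancel₀ (pow_ne_zero (k - 2*m) (two_ne_zero (α := ℂ)))
  have e1 : (2:ℂ)^(k - 2*m) * ((2:ℂ)^(n - k) * (ascPochhammer ℂ ((n + 1) / 2)).eval N *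
      (ascPochhammer ℂ (n / 2 - m)).eval (N + 1/2 + m)) =
      (2:ℂ)^(n - 2*m) * (ascPochhammer ℂ ((n + 1) / 2)).eval N *
      (ascPochhammer ℂ (n / 2 - m)).eval (N + 1/2 + m) := by
    rw [← mul_assoc, ← mul_assoc, ← pow_add, show k - 2*m + (n - k) = n - 2*m by omega]
  rw [e1, poch_keyA n m N (by omega),
    show n - 2*m = (k - 2*m) + (n - k) by omega, poch_split]
  have e2 : (2 * (N + (m:ℂ)) + ((k - 2*m : ℕ) : ℂ)) = 2 * N + k := by
    push_cast [Nat.cast_sub hm]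
    ring
  rw [e2]
  have hA := poch_keyA k m N hm
  linear_combination (-(ascPochhammer ℂ (n - k)).eval (2 * N + k)) * hA

lemma RH_term_eq (n m j : ℕ) (N X Y : ℂ) (hj : j + 2 * m ≤ n) :
    (-1)^m * (ascPochhammer ℂ ((n+1)/2)).eval N *
      (ascPochhammer ℂ (n/2 - m)).eval (N + 1/2 + (m:ℂ)) *
      ((n.factorial : ℂ)/(((n - 2*m).factorial : ℂ) * (m.factorial : ℂ))) *
      ((2*X)^j * (2*Y)^(n - 2*m - j) * (((n - 2*m).choose j : ℕ) : ℂ))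
    = (n.choose (n-j) : ℂ) * (ascPochhammer ℂ (n - (n-j))).eval (1 - 2*N - (n:ℂ)) *
      (-X)^(n - (n-j)) *
      ((-1)^m * (ascPochhammer ℂ ((n-j+1)/2)).eval N *
        (ascPochhammer ℂ ((n-j)/2 - m)).eval (N + 1/2 + (m:ℂ)) *
        (((n-j).factorial : ℂ)/(((n-j - 2*m).factorial : ℂ) * (m.factorial : ℂ))) *
        (2*Y)^(n-j - 2*m)) := by
  have hjn : j ≤ n := by omega
  rw [Nat.sub_sub_self hjn, Nat.choose_symm hjn,
    show n - 2*m - j = n - j - 2*m by omega,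
    show (1 - 2*N - (n:ℂ)) = 1 - (2*N + ((n - j : ℕ):ℂ)) - (j:ℂ) by
      push_cast [Nat.cast_sub hjn]; ring,
    poch_reflect j (2*N + ((n - j : ℕ):ℂ)),
    Nat.cast_choose ℂ (show j ≤ n - 2*m by omega),
    Nat.cast_choose ℂ hjn,
    show n - 2*m - j = n - j - 2*m by omega,
    neg_pow, mul_pow]
  have hkey := poch_key n (n - j) m N (by omega) (by omega)
  rw [show n - (n - j) = j by omega] at hkey
  have h1 : ((n - 2*m).factorial : ℂ) ≠ 0 := Nat.cast_ne_zero.mpr (Nat.factorial_ne_zero _)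
  have h2 : ((m).factorial : ℂ) ≠ 0 := Nat.cast_ne_zero.mpr (Nat.factorial_ne_zero _)
  have h3 : ((j).factorial : ℂ) ≠ 0 := Nat.cast_ne_zero.mpr (Nat.factorial_ne_zero _)
  have h4 : ((n - j).factorial : ℂ) ≠ 0 := Nat.cast_ne_zero.mpr (Nat.factorial_ne_zero _)
  have h5 : ((n - j - 2*m).factorial : ℂ) ≠ 0 := Nat.cast_ne_zero.mpr (Nat.factorial_ne_zero _)
  have hfact : ((n.factorial : ℂ)/(((n - 2*m).factorial : ℂ) * (m.factorial : ℂ))) *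
      (((n - 2*m).factorial : ℂ)/((j.factorial : ℂ) * ((n - j - 2*m).factorial : ℂ))) =
      ((n.factorial : ℂ)/((j.factorial : ℂ) * ((n - j).factorial : ℂ))) *
      (((n - j).factorial : ℂ)/(((n - j - 2*m).factorial : ℂ) * (m.factorial : ℂ))) := by
    field_simp
  have hsq : ((-1:ℂ))^j * ((-1:ℂ))^j = 1 := by
    rw [← mul_pow]; norm_num
  linear_combination ((-1:ℂ)^m * X^j * (2*Y)^(n - j - 2*m)) *
    ( ((2:ℂ)^j * (ascPochhammer ℂ ((n+1)/2)).eval N *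
        (ascPochhammer ℂ (n/2 - m)).eval (N + 1/2 + (m:ℂ))) * hfact
      + (((n.factorial : ℂ)/((j.factorial : ℂ) * ((n - j).factorial : ℂ))) *
         (((n-j).factorial : ℂ)/(((n-j - 2*m).factorial : ℂ) * (m.factorial : ℂ)))) * hkey
      - (((n.factorial : ℂ)/((j.factorial : ℂ) * ((n - j).factorial : ℂ))) *
         (((n-j).factorial : ℂ)/(((n-j - 2*m).factorial : ℂ) * (m.factorial : ℂ))) *
         (ascPochhammer ℂ j).eval (2*N + ((n - j : ℕ):ℂ)) *
         (ascPochhammer ℂ ((n-j+1)/2)).eval N *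
         (ascPochhammer ℂ ((n-j)/2 - m)).eval (N + 1/2 + (m:ℂ))) * hsq )

/-- The scaled relativistic Hermite polynomial `Ĥ_n^N(X)`, a polynomial in both `N` and `X`;
for real `N > 0` it equals `N^(n/2) * H_n^N(X√N)`.  Here the quotient
`(2N)_n / (N + 1/2)_k` has been rewritten, using `(2N)_n = 2^n (N)_⌈n/2⌉ (N+1/2)_⌊n/2⌋`,
as the polynomial `2^n (N)_⌈n/2⌉ (N + 1/2 + k)_(⌊n/2⌋ - k)`. -/
noncomputable def Hhat (n : ℕ) (N X : ℂ) : ℂ :=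
  ∑ k ∈ Finset.range (n / 2 + 1),
    (-1) ^ k * (ascPochhammer ℂ ((n + 1) / 2)).eval N *
      (ascPochhammer ℂ (n / 2 - k)).eval (N + 1 / 2 + (k : ℂ)) *
      ((n.factorial : ℂ) / (((n - 2 * k).factorial : ℂ) * (k.factorial : ℂ))) *
      (2 * X) ^ (n - 2 * k)

/-- Addition theorem for relativistic Hermite polynomials:
`Ĥ_n^N(X+Y) = Σ_{k=0}^n C(n,k) (1-2N-n)_(n-k) (-X)^(n-k) Ĥ_k^N(Y)`. -/
theorem RH_addition (n : ℕ) (N X Y : ℂ) :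
    Hhat n N (X + Y) =
      ∑ k ∈ Finset.range (n + 1),
        (n.choose k : ℂ) * (ascPochhammer ℂ (n - k)).eval (1 - 2 * N - (n : ℂ)) *
          (-X) ^ (n - k) * Hhat k N Y := by
  calc Hhat n N (X + Y)
      = ∑ m ∈ Finset.range (n / 2 + 1), ∑ j ∈ Finset.range (n - 2 * m + 1),
          (-1) ^ m * (ascPochhammer ℂ ((n + 1) / 2)).eval N *
            (ascPochhammer ℂ (n / 2 - m)).eval (N + 1 / 2 + (m : ℂ)) *
            ((n.factorial : ℂ) / (((n - 2 * m).factorial : ℂ) * (m.factorial : ℂ))) *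
            ((2 * X) ^ j * (2 * Y) ^ (n - 2 * m - j) * (((n - 2 * m).choose j : ℕ) : ℂ)) := by
        rw [Hhat]
        refine Finset.sum_congr rfl fun m _ => ?_
        rw [show 2 * (X + Y) = 2 * X + 2 * Y by ring, add_pow, Finset.mul_sum]
    _ = ∑ j ∈ Finset.range (n + 1), ∑ m ∈ Finset.range ((n - j) / 2 + 1),
          (-1) ^ m * (ascPochhammer ℂ ((n + 1) / 2)).eval N *
            (ascPochhammer ℂ (n / 2 - m)).eval (N + 1 / 2 + (m : ℂ)) *
            ((n.factorial : ℂ) / (((n - 2 * m).factorial : ℂ) * (m.factorial : ℂ))) *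
            ((2 * X) ^ j * (2 * Y) ^ (n - 2 * m - j) * (((n - 2 * m).choose j : ℕ) : ℂ)) := by
        refine Finset.sum_comm' fun m j => ?_
        simp only [Finset.mem_range]
        omega
    _ = ∑ j ∈ Finset.range (n + 1), ∑ m ∈ Finset.range ((n - j) / 2 + 1),
          (n.choose (n - j) : ℂ) *
            (ascPochhammer ℂ (n - (n - j))).eval (1 - 2 * N - (n : ℂ)) *
            (-X) ^ (n - (n - j)) *
            ((-1) ^ m * (ascPochhammer ℂ ((n - j + 1) / 2)).eval N *
              (ascPochhammer ℂ ((n - j) / 2 - m)).eval (N + 1 / 2 + (m : ℂ)) *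
              (((n - j).factorial : ℂ) /
                (((n - j - 2 * m).factorial : ℂ) * (m.factorial : ℂ))) *
              (2 * Y) ^ (n - j - 2 * m)) := by
        refine Finset.sum_congr rfl fun j hj => Finset.sum_congr rfl fun m hm => ?_
        simp only [Finset.mem_range] at hj hm
        exact RH_term_eq n m j N X Y (by omega)
    _ = ∑ k ∈ Finset.range (n + 1), ∑ m ∈ Finset.range (k / 2 + 1),
          (n.choose k : ℂ) * (ascPochhammer ℂ (n - k)).eval (1 - 2 * N - (n : ℂ)) *
            (-X) ^ (n - k) *
            ((-1) ^ m * (ascPochhammer ℂ ((k + 1) / 2)).eval N *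
              (ascPochhammer ℂ (k / 2 - m)).eval (N + 1 / 2 + (m : ℂ)) *
              ((k.factorial : ℂ) / (((k - 2 * m).factorial : ℂ) * (m.factorial : ℂ))) *
              (2 * Y) ^ (k - 2 * m)) :=
        Finset.sum_range_reflect
          (fun k => ∑ m ∈ Finset.range (k / 2 + 1),
            (n.choose k : ℂ) * (ascPochhammer ℂ (n - k)).eval (1 - 2 * N - (n : ℂ)) *
              (-X) ^ (n - k) *
              ((-1) ^ m * (ascPochhammer ℂ ((k + 1) / 2)).eval N *
                (ascPochhammer ℂ (k / 2 - m)).eval (N + 1 / 2 + (m : ℂ)) *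
                ((k.factorial : ℂ) / (((k - 2 * m).factorial : ℂ) * (m.factorial : ℂ))) *
                (2 * Y) ^ (k - 2 * m))) (n + 1)
    _ = ∑ k ∈ Finset.range (n + 1),
          (n.choose k : ℂ) * (ascPochhammer ℂ (n - k)).eval (1 - 2 * N - (n : ℂ)) *
            (-X) ^ (n - k) * Hhat k N Y := by
        refine Finset.sum_congr rfl fun k _ => ?_
        rw [Hhat, Finset.mul_sum]
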